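/- arXiv:math/0306210 — 17 statements merged into one kernel-verified Lean document; each statement's English description precedes it below -/
import Mathlib

section
/- If a ternary semigroup (G,[ ]) contains an element e such that [eye] = y for all y in G, then the binary operation x∗y = [xey] is associative and [xyz] = (x∗y)∗z for all x,y,z in G, i.e. the ternary operation is derived from this binary semigroup. -/
/-- If a ternary semigroup (G,[ ]) contains an element e such that
[eye] = y for all y, then x∗y = [xey] is associative and [xyz] = (x∗y)∗z. -/
theorem stmt_0 {G : Type*} (m : G → G → G → G)
    (hassoc : ∀ x y z u v : G,
      m (m x y z) u v = m x (m y z u) v ∧ m x (m y z u) v = m x y (m z u v))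
    (e : G) (he : ∀ y : G, m e y e = y) :
    (∀ x y z : G, m (m x e y) e z = m x e (m y e z)) ∧
    (∀ x y z : G, m x y z = m (m x e y) e z) :=
  ⟨fun x y z => (hassoc x e y e z).1.trans (hassoc x e y e z).2,
    fun x y z => by rw [(hassoc x e y e z).1, he y]⟩
end

section
/- Let (G,[ ]) be a ternary semigroup with elements e and a such that [eye] = y and [aya] = y for all y in G. Then the binary semigroups (G,∗) with x∗y = [xey] and (G,⋄) with x⋄y = [xay] are isomorphic, via the map φ(x) = [xae] with inverse ψ(x) = [eax]. -/
/-!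
Associativity gives `[[xey]ae] = [xe[yae]]`, and `[aea] = e` turns the middle `e` into
`[xae] a [yae]`, so `φ` is multiplicative. Both composites of `φ` and `ψ` collapse to
`[e[axa]e] = [exe] = x`, and `ψ`, being the inverse of a homomorphism, is one as well.
-/

theorem Function.LeftInverse.map_binop_of_rightInverse {α β : Type*} {f : α → β} {g : β → α}
    {mul : α → α → α} {mul' : β → β → β} (hf : ∀ x y, f (mul x y) = mul' (f x) (f y))
    (hgf : Function.LeftInverse g f) (hfg : Function.RightInverse g f) (x y : β) :
    g (mul' x y) = mul (g x) (g y) := by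
  calc g (mul' x y) = g (mul' (f (g x)) (f (g y))) := by rw [hfg x, hfg y]
    _ = g (f (mul (g x) (g y))) := by rw [hf]
    _ = mul (g x) (g y) := hgf _

section TernaryTranslates

variable {G : Type*} {m : G → G → G → G} {e a : G}

theorem leftInverse_ternary_translates
    (hright : ∀ x y z u v : G, m x (m y z u) v = m x y (m z u v))
    (he : ∀ y : G, m e y e = y) (ha : ∀ y : G, m a y a = y) :
    Function.LeftInverse (m e a) (fun x => m x a e) := fun x => by
  show m e a (m x a e) = x
  rw [← hright, ha, he]

theorem rightInverse_ternary_translates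
    (hleft : ∀ x y z u v : G, m (m x y z) u v = m x (m y z u) v)
    (he : ∀ y : G, m e y e = y) (ha : ∀ y : G, m a y a = y) :
    Function.RightInverse (m e a) (fun x => m x a e) := fun x => by
  show m (m e a x) a e = x
  rw [hleft, ha, he]

theorem ternary_translate_map_mul
    (hleft : ∀ x y z u v : G, m (m x y z) u v = m x (m y z u) v)
    (hright : ∀ x y z u v : G, m x (m y z u) v = m x y (m z u v))
    (hae : m a e a = e) (x y : G) :
    m (m x e y) a e = m (m x a e) a (m y a e) := by
  calc m (m x e y) a e = m x e (m y a e) := by rw [hleft, hright]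
    _ = m (m x a e) a (m y a e) := by rw [hleft, hae]

end TernaryTranslates

/-- If e,a satisfy [eye]=y and [aya]=y for all y, then the binary
semigroups (G,∗), x∗y=[xey], and (G,⋄), x⋄y=[xay], are isomorphic via
φ(x)=[xae] with inverse ψ(x)=[eax]. -/
theorem stmt_1 {G : Type*} (m : G → G → G → G)
    (hassoc : ∀ x y z u v : G,
      m (m x y z) u v = m x (m y z u) v ∧ m x (m y z u) v = m x y (m z u v))
    (e a : G) (he : ∀ y : G, m e y e = y) (ha : ∀ y : G, m a y a = y) :
    let φ : G → G := fun x => m x a e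
    let ψ : G → G := fun x => m e a x
    -- φ is a homomorphism (G,∗) → (G,⋄) and ψ a homomorphism (G,⋄) → (G,∗):
    (∀ x y : G, φ (m x e y) = m (φ x) a (φ y)) ∧
    (∀ x y : G, ψ (m x a y) = m (ψ x) e (ψ y)) ∧
    -- ψ is a two-sided inverse of φ:
    (∀ x : G, ψ (φ x) = x) ∧ (∀ x : G, φ (ψ x) = x) := by
  intro φ ψ
  have hleft := fun x y z u v => (hassoc x y z u v).1
  have hright := fun x y z u v => (hassoc x y z u v).2
  have hφ := ternary_translate_map_mul hleft hright (ha e)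
  have hψφ := leftInverse_ternary_translates hright he ha
  have hφψ := rightInverse_ternary_translates hleft he ha
  exact ⟨hφ, hψφ.map_binop_of_rightInverse (mul := fun x y => m x e y)
    (mul' := fun x y => m x a y) hφ hφψ, hψφ, hφψ⟩
end

section
/- For any ternary semigroup (G,[ ]) with a left identity e (i.e. [eex] = x for all x), the binary operation x⊙y = [xey] is associative, the map μ(x) = [exe] is an endomorphism of (G,⊙), and [xyz] = x⊙μ(y)⊙z for all x,y,z in G. -/
namespace Ternary

variable {G : Type*} {m : G → G → G → G}

theorem mul_mul_assoc (h₁ : ∀ x y z u v : G, m (m x y z) u v = m x (m y z u) v)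
    (h₂ : ∀ x y z u v : G, m x (m y z u) v = m x y (m z u v)) (x a y b z : G) :
    m (m x a y) b z = m x a (m y b z) := by
  rw [h₁, h₂]

theorem conj_mul (h₁ : ∀ x y z u v : G, m (m x y z) u v = m x (m y z u) v)
    (h₂ : ∀ x y z u v : G, m x (m y z u) v = m x y (m z u v))
    {e : G} (he : ∀ x : G, m e e x = x) (x y : G) :
    m e (m x e y) e = m (m e x e) e (m e y e) := by
  rw [h₂, h₁, h₂, he]

theorem conj_conj (h₂ : ∀ x y z u v : G, m x (m y z u) v = m x y (m z u v))
    {e : G} (he : ∀ x : G, m e e x = x) (y : G) :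
    m e (m e y e) e = m y e e := by
  rw [h₂, he]

theorem eq_mul_conj_mul (h₁ : ∀ x y z u v : G, m (m x y z) u v = m x (m y z u) v)
    (h₂ : ∀ x y z u v : G, m x (m y z u) v = m x y (m z u v))
    {e : G} (he : ∀ x : G, m e e x = x) (x y z : G) :
    m x y z = m (m x e (m e y e)) e z := by
  rw [h₁, conj_conj h₂ he, h₂, he]

end Ternary

/-- For a ternary semigroup with a left identity e ([eex]=x), the
operation x⊙y=[xey] is associative, μ(x)=[exe] is an endomorphism of (G,⊙),
and [xyz] = x⊙μ(y)⊙z. -/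
theorem stmt_2 {G : Type*} (m : G → G → G → G)
    (hassoc : ∀ x y z u v : G,
      m (m x y z) u v = m x (m y z u) v ∧ m x (m y z u) v = m x y (m z u v))
    (e : G) (he : ∀ x : G, m e e x = x) :
    (∀ x y z : G, m (m x e y) e z = m x e (m y e z)) ∧
    (∀ x y : G, m e (m x e y) e = m (m e x e) e (m e y e)) ∧
    (∀ x y z : G, m x y z = m (m x e (m e y e)) e z) := by
  have h₁ := fun x y z u v => (hassoc x y z u v).1
  have h₂ := fun x y z u v => (hassoc x y z u v).2
  exact ⟨fun x y z => Ternary.mul_mul_assoc h₁ h₂ x e y e z, Ternary.conj_mul h₁ h₂ he,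
    Ternary.eq_mul_conj_mul h₁ h₂ he⟩
end

section
/- A ternary semigroup is left and right cancellative if and only if it is middle cancellative; consequently a ternary semigroup is cancellative (left, middle and right) if and only if it is middle cancellative, and if and only if it is left and right cancellative. -/
/-! Each cancellation law is obtained from the others by cancelling twice in a suitably
bracketed product of five elements: e.g. `[[a b x] b a] = [a [b x b] a]`, so middle cancellation
(first with `a, a`, then with `b, b`) yields left cancellation. -/

section TernaryCancel

variable {G : Type*} (m : G → G → G → G)

def IsTernaryLeftCancel : Prop := ∀ a b x y : G, m a b x = m a b y → x = y

def IsTernaryMiddleCancel : Prop := ∀ a b x y : G, m a x b = m a y b → x = y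

def IsTernaryRightCancel : Prop := ∀ a b x y : G, m x a b = m y a b → x = y

variable {m}

theorem IsTernaryMiddleCancel.of_left_of_right
    (hassoc : ∀ x y z u v : G, m (m x y z) u v = m x (m y z u) v)
    (hL : IsTernaryLeftCancel m) (hR : IsTernaryRightCancel m) : IsTernaryMiddleCancel m := by
  intro a b x y h
  have e : m (m x a x) b b = m (m x a y) b b := by
    rw [hassoc x a x b b, hassoc x a y b b, h]
  exact hL x a x y (hR b b _ _ e)

theorem IsTernaryMiddleCancel.left
    (hassoc : ∀ x y z u v : G, m (m x y z) u v = m x (m y z u) v)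
    (hM : IsTernaryMiddleCancel m) : IsTernaryLeftCancel m := by
  intro a b x y h
  have e : m a (m b x b) a = m a (m b y b) a := by
    rw [← hassoc a b x b a, ← hassoc a b y b a, h]
  exact hM b b x y (hM a a _ _ e)

theorem IsTernaryMiddleCancel.right
    (hassoc : ∀ x y z u v : G, m x (m y z u) v = m x y (m z u v))
    (hM : IsTernaryMiddleCancel m) : IsTernaryRightCancel m := by
  intro a b x y h
  have e : m b (m a x a) b = m b (m a y a) b := by
    rw [hassoc b a x a b, hassoc b a y a b, h]
  exact hM a a x y (hM b b _ _ e)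

theorem isTernaryMiddleCancel_iff_left_and_right
    (hassoc : ∀ x y z u v : G,
      m (m x y z) u v = m x (m y z u) v ∧ m x (m y z u) v = m x y (m z u v)) :
    IsTernaryMiddleCancel m ↔ IsTernaryLeftCancel m ∧ IsTernaryRightCancel m :=
  ⟨fun hM => ⟨hM.left (hassoc · · · · · |>.1), hM.right (hassoc · · · · · |>.2)⟩,
    fun ⟨hL, hR⟩ => .of_left_of_right (hassoc · · · · · |>.1) hL hR⟩

end TernaryCancel

/-- A ternary semigroup is left and right cancellative iff it is
middle cancellative; cancellative iff middle cancellative iff left and right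
cancellative. -/
theorem stmt_3 {G : Type*} (m : G → G → G → G)
    (hassoc : ∀ x y z u v : G,
      m (m x y z) u v = m x (m y z u) v ∧ m x (m y z u) v = m x y (m z u v)) :
    let L := ∀ a b x y : G, m a b x = m a b y → x = y
    let M := ∀ a b x y : G, m a x b = m a y b → x = y
    let R := ∀ a b x y : G, m x a b = m y a b → x = y
    ((L ∧ R) ↔ M) ∧ ((L ∧ M ∧ R) ↔ M) ∧ ((L ∧ M ∧ R) ↔ (L ∧ R)) := by
  intro L M R
  have key : M ↔ L ∧ R := isTernaryMiddleCancel_iff_left_and_right hassoc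
  tauto
end

section
/- If a ternary semigroup (G,[ ]) satisfies the identity [xyz] = [yxz] and there exist a,b in G with [axb] = x for all x, then (G,[ ]) is commutative, i.e. [xyz] is invariant under all permutations of x,y,z. -/
/-!
Write `[xyz]` for `m x y z`. Since `[axb] = x`, every product factors as
`[xyz] = [a x [byz]]`, so it suffices to show `[byz] = [bzy]`. Moving `b` from the
front to the back, `[byz] = [yzb]`, turns this into the given symmetry in the first two
arguments. The transpositions of the first two and of the last two arguments then
generate all permutations.
-/

section TernarySemigroup

variable {G : Type*}

def TernaryAssociative (m : G → G → G → G) : Prop :=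
  ∀ x y z u v : G, m (m x y z) u v = m x (m y z u) v ∧ m x (m y z u) v = m x y (m z u v)

variable {m : G → G → G → G} {a b : G}

theorem ternary_eq_of_swap12_of_swap23 (h12 : ∀ x y z : G, m x y z = m y x z)
    (h23 : ∀ x y z : G, m x y z = m x z y) (x y z : G) :
    m x y z = m z y x ∧ m x y z = m y z x ∧ m x y z = m z x y :=
  ⟨by rw [h23, h12, h23], by rw [h12, h23], by rw [h23, h12]⟩

theorem ternary_eq_unit_left_mul (hassoc : TernaryAssociative m) (hab : ∀ x : G, m a x b = x)
    (x y z : G) : m x y z = m a x (m b y z) :=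
  calc m x y z = m (m a x b) y z := by rw [hab]
    _ = m a x (m b y z) := (hassoc a x b y z).1.trans (hassoc a x b y z).2

theorem ternary_unit_unit_mul_of_swap12 (hassoc : TernaryAssociative m)
    (h12 : ∀ x y z : G, m x y z = m y x z) (hab : ∀ x : G, m a x b = x) (x y z : G) :
    m a b (m x y z) = m x y z :=
  calc m a b (m x y z) = m a (m b x y) z := (hassoc a b x y z).2.symm
    _ = m a (m x b y) z := by rw [h12 b]
    _ = m (m a x b) y z := (hassoc a x b y z).1.symm
    _ = m x y z := by rw [hab]

theorem ternary_rotate_unit_right_of_swap12 (hassoc : TernaryAssociative m)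
    (h12 : ∀ x y z : G, m x y z = m y x z) (hab : ∀ x : G, m a x b = x) (y z : G) :
    m b y z = m y z b :=
  calc m b y z = m b y (m a z b) := by rw [hab]
    _ = m b (m y a z) b := (hassoc b y a z b).2.symm
    _ = m b (m a y z) b := by rw [h12 y a]
    _ = m a b (m y z b) := by rw [(hassoc b a y z b).2, h12 b a]
    _ = m y z b := ternary_unit_unit_mul_of_swap12 hassoc h12 hab y z b

theorem ternary_swap23_of_swap12 (hassoc : TernaryAssociative m)
    (h12 : ∀ x y z : G, m x y z = m y x z) (hab : ∀ x : G, m a x b = x) (x y z : G) :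
    m x y z = m x z y := by
  have hb := ternary_rotate_unit_right_of_swap12 hassoc h12 hab
  rw [ternary_eq_unit_left_mul hassoc hab x y z, hb, h12 y, ← hb,
    ← ternary_eq_unit_left_mul hassoc hab]

end TernarySemigroup

/-- If a ternary semigroup satisfies [xyz]=[yxz] and there are a,b
with [axb]=x for all x, then it is commutative (invariant under all
permutations of the three arguments). -/
theorem stmt_4 {G : Type*} (m : G → G → G → G)
    (hassoc : ∀ x y z u v : G,
      m (m x y z) u v = m x (m y z u) v ∧ m x (m y z u) v = m x y (m z u v))
    (hcomm12 : ∀ x y z : G, m x y z = m y x z)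
    (a b : G) (hab : ∀ x : G, m a x b = x) :
    ∀ x y z : G, m x y z = m y x z ∧ m x y z = m x z y ∧ m x y z = m z y x ∧
      m x y z = m y z x ∧ m x y z = m z x y := by
  have hcomm23 := ternary_swap23_of_swap12 hassoc hcomm12 hab
  intro x y z
  exact ⟨hcomm12 x y z, hcomm23 x y z, ternary_eq_of_swap12_of_swap23 hcomm12 hcomm23 x y z⟩
end

section
/- A ternary semigroup (G,[ ]) equipped with a unary operation x ↦ x̄ satisfying the identities [y x x̄] = y and [x x̄ y] = y for all x,y is a ternary group, i.e. all equations [xab] = c, [ayb] = c, [abz] = c are uniquely solvable. -/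
/-! The map `x ↦ x̄` acts as an inverse: `[[x a b] b̄ ā] = x`, `[ā [a y b] b̄] = y` and
`[b̄ ā [a b z]] = z`, together with the reverse compositions, so each of the three translations
`x ↦ [x a b]`, `y ↦ [a y b]`, `z ↦ [a b z]` is a bijection with an explicit inverse. -/

section TernaryGroup

variable {G : Type*} {m : G → G → G → G} {sk : G → G}

theorem sk_involutive (h1 : ∀ x y, m y x (sk x) = y) (h2 : ∀ x y, m x (sk x) y = y) :
    Function.Involutive sk :=
  fun x => (h2 x (sk (sk x))).symm.trans (h1 (sk x) x)

theorem mul_sk_self (h1 : ∀ x y, m y x (sk x) = y) (h2 : ∀ x y, m x (sk x) y = y) (x y : G) :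
    m y (sk x) x = y := by
  simpa only [sk_involutive h1 h2 x] using h1 (sk x) y

theorem sk_self_mul (h1 : ∀ x y, m y x (sk x) = y) (h2 : ∀ x y, m x (sk x) y = y) (x y : G) :
    m (sk x) x y = y := by
  simpa only [sk_involutive h1 h2 x] using h2 (sk x) y

theorem bijective_ternary_left (hA : ∀ x y z u v, m (m x y z) u v = m x (m y z u) v)
    (h1 : ∀ x y, m y x (sk x) = y) (h2 : ∀ x y, m x (sk x) y = y) (a b : G) :
    Function.Bijective fun x => m x a b := by
  refine Function.bijective_iff_has_inverse.2 ⟨fun x => m x (sk b) (sk a), fun x => ?_, fun x => ?_⟩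
  · simp only [hA, h1]
  · simp only [hA, mul_sk_self h1 h2]

theorem bijective_ternary_middle (hA : ∀ x y z u v, m (m x y z) u v = m x (m y z u) v)
    (h1 : ∀ x y, m y x (sk x) = y) (h2 : ∀ x y, m x (sk x) y = y) (a b : G) :
    Function.Bijective fun y => m a y b := by
  refine Function.bijective_iff_has_inverse.2 ⟨fun y => m (sk a) y (sk b), fun y => ?_, fun y => ?_⟩
  · simp only [← hA, sk_self_mul h1 h2, h1]
  · simp only [← hA, h2, mul_sk_self h1 h2]

theorem bijective_ternary_right (hB : ∀ x y z u v, m x (m y z u) v = m x y (m z u v))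
    (h1 : ∀ x y, m y x (sk x) = y) (h2 : ∀ x y, m x (sk x) y = y) (a b : G) :
    Function.Bijective fun z => m a b z := by
  refine Function.bijective_iff_has_inverse.2 ⟨fun z => m (sk b) (sk a) z, fun z => ?_, fun z => ?_⟩
  · simp only [← hB, sk_self_mul h1 h2]
  · simp only [← hB, h2]

end TernaryGroup

/-- A ternary semigroup with a unary operation x ↦ x̄ satisfying
[y x x̄]=y and [x x̄ y]=y is a ternary group: all equations [xab]=c, [ayb]=c,
[abz]=c are uniquely solvable. -/
theorem stmt_7 {G : Type*} (m : G → G → G → G)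
    (hassoc : ∀ x y z u v : G,
      m (m x y z) u v = m x (m y z u) v ∧ m x (m y z u) v = m x y (m z u v))
    (sk : G → G)
    (h1 : ∀ x y : G, m y x (sk x) = y)
    (h2 : ∀ x y : G, m x (sk x) y = y) :
    ∀ a b c : G,
      (∃! x, m x a b = c) ∧ (∃! y, m a y b = c) ∧ (∃! z, m a b z = c) := by
  have hA := fun x y z u v => (hassoc x y z u v).1
  have hB := fun x y z u v => (hassoc x y z u v).2
  intro a b c
  exact ⟨(bijective_ternary_left hA h1 h2 a b).existsUnique c,
    (bijective_ternary_middle hA h1 h2 a b).existsUnique c,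
    (bijective_ternary_right hB h1 h2 a b).existsUnique c⟩
end

section
/- A ternary semigroup (G,[ ]) is an idempotent ternary group (every element satisfies [xxx] = x) if and only if it satisfies the identities [yxx] = y and [xxy] = y for all x,y. -/
/-!
In an idempotent ternary group, associativity and `[xxx] = x` give `[[yxx]xx] = [yxx]`, so `y` and
`[yxx]` both solve `[? x x] = [yxx]` and unique solvability identifies them; `[xxy] = y` is symmetric.
Conversely, if every pair `x, x` acts neutrally on both sides, the equations `[xab] = c`, `[ayb] = c`,
`[abz] = c` have the explicit solutions `[cba]`, `[acb]`, `[bac]`, and cancelling the neutral pairs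
shows that any solution equals these.
-/

section TernaryGroup

variable {G : Type*} {m : G → G → G → G}

theorem mul_pair_right_eq_self (hassoc : ∀ x y z u v, m (m x y z) u v = m x (m y z u) v)
    (hid : ∀ x, m x x x = x) (hsolv : ∀ a b c, ∃! x, m x a b = c) (x y : G) :
    m y x x = y :=
  have hfix : m (m y x x) x x = m y x x := by rw [hassoc, hid]
  (hsolv x x (m y x x)).unique hfix rfl

theorem mul_pair_left_eq_self (hassoc : ∀ x y z u v, m x (m y z u) v = m x y (m z u v))
    (hid : ∀ x, m x x x = x) (hsolv : ∀ a b c, ∃! z, m a b z = c) (x y : G) :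
    m x x y = y :=
  have hfix : m x x (m x x y) = m x x y := by rw [← hassoc, hid]
  (hsolv x x (m x x y)).unique hfix rfl

theorem existsUnique_left_solution (hassoc : ∀ x y z u v, m (m x y z) u v = m x (m y z u) v)
    (hright : ∀ x y, m y x x = y) (a b c : G) : ∃! x, m x a b = c := by
  refine ⟨m c b a, ?_, fun x hx => ?_⟩
  · calc m (m c b a) a b = m c (m b a a) b := hassoc c b a a b
      _ = c := by rw [hright, hright]
  · calc x = m x (m a b b) a := by rw [hright, hright]
      _ = m c b a := by rw [← hassoc, hx]

theorem existsUnique_middle_solution (hassoc : ∀ x y z u v, m (m x y z) u v = m x (m y z u) v)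
    (hright : ∀ x y, m y x x = y) (hleft : ∀ x y, m x x y = y) (a b c : G) :
    ∃! y, m a y b = c := by
  refine ⟨m a c b, ?_, fun y hy => ?_⟩
  · calc m a (m a c b) b = m (m a a c) b b := (hassoc a a c b b).symm
      _ = c := by rw [hright, hleft]
  · calc y = m (m a a y) b b := by rw [hright, hleft]
      _ = m a c b := by rw [hassoc, hy]

theorem existsUnique_right_solution (hassoc : ∀ x y z u v, m x (m y z u) v = m x y (m z u v))
    (hleft : ∀ x y, m x x y = y) (a b c : G) : ∃! z, m a b z = c := by
  refine ⟨m b a c, ?_, fun z hz => ?_⟩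
  · calc m a b (m b a c) = m a (m b b a) c := (hassoc a b b a c).symm
      _ = c := by rw [hleft, hleft]
  · calc z = m b (m a a b) z := by rw [hleft, hleft]
      _ = m b a c := by rw [hassoc, hz]

end TernaryGroup

/-- A ternary semigroup is an idempotent ternary group iff it
satisfies the identities [yxx]=y and [xxy]=y. -/
theorem stmt_8 {G : Type*} (m : G → G → G → G)
    (hassoc : ∀ x y z u v : G,
      m (m x y z) u v = m x (m y z u) v ∧ m x (m y z u) v = m x y (m z u v)) :
    ((∀ a b c : G,
        (∃! x, m x a b = c) ∧ (∃! y, m a y b = c) ∧ (∃! z, m a b z = c)) ∧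
      (∀ x : G, m x x x = x)) ↔
    (∀ x y : G, m y x x = y ∧ m x x y = y) := by
  have hassoc₁ x y z u v := (hassoc x y z u v).1
  have hassoc₂ x y z u v := (hassoc x y z u v).2
  constructor
  · rintro ⟨hsolv, hid⟩ x y
    exact ⟨mul_pair_right_eq_self hassoc₁ hid (fun a b c => (hsolv a b c).1) x y,
      mul_pair_left_eq_self hassoc₂ hid (fun a b c => (hsolv a b c).2.2) x y⟩
  · intro h
    have hright x y : m y x x = y := (h x y).1
    have hleft x y : m x x y = y := (h x y).2
    exact ⟨fun a b c => ⟨existsUnique_left_solution hassoc₁ hright a b c,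
      existsUnique_middle_solution hassoc₁ hright hleft a b c,
      existsUnique_right_solution hassoc₂ hleft a b c⟩, fun x => hright x x⟩
end

section
/- A ternary group satisfying the identity [x y x̄] = y for all x,y (or the identity [x̄ y x] = y) is commutative. -/
/-!
The skew element `x̄` is a two-sided "inverse": `[x̄ x b] = b` and `[b x x̄] = b`, by
associativity and cancellation from `[x x x̄] = x`. If `[x y x̄] = y`, then reassociating
`[[x y x̄] x z]` gives `[y x z] = [x y z]`, and conjugating by `c` in the middle slot,
`[c̄ [c a b] c] = [a b c]`, turns this swap of the first two arguments into a swap of the last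
two. These two transpositions generate all permutations. The identity `[x̄ y x] = y` is the
same hypothesis for the mirrored operation `[x y z]' = [z y x]`, which is again a ternary
group with the same skew element.
-/

section TernaryGroup

variable {G : Type*}

def TernarySolvable (m : G → G → G → G) : Prop :=
  ∀ a b c : G, (∃! x, m x a b = c) ∧ (∃! y, m a y b = c) ∧ (∃! z, m a b z = c)

variable {m : G → G → G → G}

theorem TernaryAssociative.outer (h : TernaryAssociative m) (x y z u v : G) :
    m (m x y z) u v = m x y (m z u v) :=
  (h x y z u v).1.trans (h x y z u v).2

theorem TernaryAssociative.mirror (h : TernaryAssociative m) :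
    TernaryAssociative fun x y z => m z y x :=
  fun x y z u v => ⟨(h v u z y x).2.symm, (h v u z y x).1.symm⟩

theorem TernarySolvable.mirror (h : TernarySolvable m) : TernarySolvable fun x y z => m z y x :=
  fun a b c => ⟨(h b a c).2.2, (h b a c).2.1, (h b a c).1⟩

theorem TernarySolvable.injective_left (h : TernarySolvable m) (a b : G) :
    Function.Injective fun x => m x a b :=
  fun _ v hxv => (h a b (m v a b)).1.unique hxv rfl

theorem TernarySolvable.injective_mid (h : TernarySolvable m) (a b : G) :
    Function.Injective fun y => m a y b :=
  fun _ v hyv => (h a b (m a v b)).2.1.unique hyv rfl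

theorem TernarySolvable.injective_right (h : TernarySolvable m) (a b : G) :
    Function.Injective fun z => m a b z :=
  fun _ v hzv => (h a b (m a b v)).2.2.unique hzv rfl

theorem skew_mul_left (hassoc : TernaryAssociative m) (hsolve : TernarySolvable m)
    {sk : G → G} (hsk : ∀ x, m x x (sk x) = x) (a b : G) : m (sk a) a b = b :=
  hsolve.injective_right a a <| by simp only [← hassoc.outer, hsk]

theorem mul_skew_right (hassoc : TernaryAssociative m) (hsolve : TernarySolvable m)
    {sk : G → G} (hsk : ∀ x, m x x (sk x) = x) (a b : G) : m b a (sk a) = b :=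
  hsolve.injective_left a a <| by simp only [hassoc.outer, skew_mul_left hassoc hsolve hsk]

theorem swap_of_mul_skew_eq (hassoc : TernaryAssociative m) (hsolve : TernarySolvable m)
    {sk : G → G} (hsk : ∀ x, m x x (sk x) = x) (hid : ∀ x y, m x y (sk x) = y) :
    (∀ x y z, m x y z = m y x z) ∧ ∀ x y z, m x y z = m x z y := by
  have swap12 (x y z : G) : m x y z = m y x z := by
    have h := hassoc.outer x y (sk x) x z
    rwa [hid, skew_mul_left hassoc hsolve hsk, eq_comm] at h
  have conj (a b c : G) : m (sk c) (m c a b) c = m a b c := by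
    rw [← (hassoc (sk c) c a b c).1, skew_mul_left hassoc hsolve hsk]
  refine ⟨swap12, fun c a b => hsolve.injective_mid (sk c) c ?_⟩
  simp only [conj, swap12 a b c]

theorem perm_of_swap (h12 : ∀ x y z : G, m x y z = m y x z) (h23 : ∀ x y z : G, m x y z = m x z y)
    (x y z : G) : m x y z = m y x z ∧ m x y z = m x z y ∧ m x y z = m z y x ∧
      m x y z = m y z x ∧ m x y z = m z x y :=
  ⟨h12 x y z, h23 x y z, (h23 x y z).trans ((h12 x z y).trans (h23 z x y)),
    (h12 x y z).trans (h23 y x z), (h23 x y z).trans (h12 x z y)⟩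

end TernaryGroup

theorem stmt_9_general {G : Type*} (m : G → G → G → G)
    (hassoc : ∀ x y z u v : G,
      m (m x y z) u v = m x (m y z u) v ∧ m x (m y z u) v = m x y (m z u v))
    (hsolve : ∀ a b c : G,
      (∃! x, m x a b = c) ∧ (∃! y, m a y b = c) ∧ (∃! z, m a b z = c))
    (sk : G → G) (hsk : ∀ x : G, m x x (sk x) = x)
    (hid : (∀ x y : G, m x y (sk x) = y) ∨ (∀ x y : G, m (sk x) y x = y)) :
    ∀ x y z : G, m x y z = m y x z ∧ m x y z = m x z y ∧ m x y z = m z y x ∧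
      m x y z = m y z x ∧ m x y z = m z x y := by
  have hassoc : TernaryAssociative m := hassoc
  have hsolve : TernarySolvable m := hsolve
  rcases hid with hid | hid
  · obtain ⟨h12, h23⟩ := swap_of_mul_skew_eq hassoc hsolve hsk hid
    exact perm_of_swap h12 h23
  · obtain ⟨h12, h23⟩ := swap_of_mul_skew_eq hassoc.mirror hsolve.mirror
      (skew_mul_left hassoc hsolve hsk · _) hid
    exact perm_of_swap (fun x y z => h23 z y x) (fun x y z => h12 z y x)

/-- A ternary group satisfying [x y x̄]=y for all x,y (or
[x̄ y x]=y) is commutative. -/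
theorem stmt_9 {G : Type*} (m : G → G → G → G)
    (hassoc : ∀ x y z u v : G,
      m (m x y z) u v = m x (m y z u) v ∧ m x (m y z u) v = m x y (m z u v))
    (hsolve : ∀ a b c : G,
      (∃! x, m x a b = c) ∧ (∃! y, m a y b = c) ∧ (∃! z, m a b z = c))
    (sk : G → G) (hsk : ∀ x : G, m x x (sk x) = x)
    (hsk_uniq : ∀ x z : G, m x x z = x → z = sk x)
    (hid : (∀ x y : G, m x y (sk x) = y) ∨ (∀ x y : G, m (sk x) y x = y)) :
    ∀ x y z : G, m x y z = m y x z ∧ m x y z = m x z y ∧ m x y z = m z y x ∧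
      m x y z = m y z x ∧ m x y z = m z x y :=
  stmt_9_general m hassoc hsolve sk hsk hid
end

section
/- (Gluskin–Hosszú theorem) For any ternary group (G,[ ]) and fixed a ∈ G, the operation x⊛y = [xay] makes G a binary group with identity ā, the map φ(x) = [ā x a] is an automorphism of (G,⊛) fixing a, and [xyz] = x ⊛ φ(y) ⊛ φ²(z) ⊛ b for all x,y,z, where b = [ā ā ā]. -/
/-!
Dörnte's identities `[y x x̄] = [x̄ x y] = [y x̄ x] = [x x̄ y] = y` say that an adjacent pair
`x x̄` or `x̄ x` may be deleted from any bracket word. Associativity rewrites every bracket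
expression to right-nested form, and deleting such pairs there reduces both sides of each
claimed identity to the same word: for instance the right-hand side of the formula is the word
`x a ā y a a ā ā z a a a ā ā ā`, which collapses to `x y z`.
-/

namespace TernaryGroup

variable {G : Type*} {m : G → G → G → G}

def Associative (m : G → G → G → G) : Prop :=
  ∀ x y z u v : G, m (m x y z) u v = m x (m y z u) v ∧ m x (m y z u) v = m x y (m z u v)

def Solvable (m : G → G → G → G) : Prop :=
  ∀ a b c : G, (∃! x, m x a b = c) ∧ (∃! y, m a y b = c) ∧ (∃! z, m a b z = c)

theorem Associative.left_eq_mid (hA : Associative m) (x y z u v : G) :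
    m (m x y z) u v = m x (m y z u) v :=
  (hA x y z u v).1

theorem Associative.mid_eq_right (hA : Associative m) (x y z u v : G) :
    m x (m y z u) v = m x y (m z u v) :=
  (hA x y z u v).2

theorem Associative.left_eq_right (hA : Associative m) (x y z u v : G) :
    m (m x y z) u v = m x y (m z u v) :=
  (hA.left_eq_mid x y z u v).trans (hA.mid_eq_right x y z u v)

theorem Solvable.exists_left (hS : Solvable m) (p q c : G) : ∃ t, m t p q = c :=
  (hS p q c).1.exists

theorem Solvable.exists_mid (hS : Solvable m) (p q c : G) : ∃ t, m p t q = c :=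
  (hS p q c).2.1.exists

theorem Solvable.exists_right (hS : Solvable m) (p q c : G) : ∃ t, m p q t = c :=
  (hS p q c).2.2.exists

theorem Solvable.mid_injective (hS : Solvable m) (p q : G) :
    Function.Injective (fun t => m p t q) :=
  fun _ _ h => (hS p q _).2.1.unique h rfl

theorem Solvable.right_injective (hS : Solvable m) (p q : G) :
    Function.Injective (m p q) :=
  fun _ _ h => (hS p q _).2.2.unique h rfl

section Skew

variable {sk : G → G}

theorem m_self_skew_right (hA : Associative m) (hS : Solvable m)
    (hsk : ∀ x, m x x (sk x) = x) (y x : G) : m y x (sk x) = y := by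
  obtain ⟨t, rfl⟩ := hS.exists_left x x y
  rw [hA.left_eq_right, hsk]

theorem m_skew_self_left (hA : Associative m) (hS : Solvable m)
    (hsk : ∀ x, m x x (sk x) = x) (x y : G) : m (sk x) x y = y :=
  hS.right_injective x x <| by rw [← hA.left_eq_right, hsk]

theorem m_skew_self_right (hA : Associative m) (hS : Solvable m)
    (hsk : ∀ x, m x x (sk x) = x) (y x : G) : m y (sk x) x = y := by
  obtain ⟨t, rfl⟩ := hS.exists_left x x y
  rw [hA.left_eq_mid, hsk]

theorem m_self_skew_left (hA : Associative m) (hS : Solvable m)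
    (hsk : ∀ x, m x x (sk x) = x) (x y : G) : m x (sk x) y = y := by
  obtain ⟨t, rfl⟩ := hS.exists_right x x y
  rw [← hA.left_eq_right, m_skew_self_right hA hS hsk]

theorem m_self_skew_nested (hA : Associative m) (hS : Solvable m)
    (hsk : ∀ x, m x x (sk x) = x) (p x u v : G) : m p x (m (sk x) u v) = m p u v := by
  rw [← hA.left_eq_right, m_self_skew_right hA hS hsk]

end Skew

end TernaryGroup

open TernaryGroup in
theorem stmt_10_general {G : Type*} (m : G → G → G → G)
    (hassoc : ∀ x y z u v : G,
      m (m x y z) u v = m x (m y z u) v ∧ m x (m y z u) v = m x y (m z u v))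
    (hsolve : ∀ a b c : G,
      (∃! x, m x a b = c) ∧ (∃! y, m a y b = c) ∧ (∃! z, m a b z = c))
    (sk : G → G) (hsk : ∀ x : G, m x x (sk x) = x)
    (a : G) :
    let mul : G → G → G := fun x y => m x a y
    let φ : G → G := fun x => m (sk a) x a
    let b : G := m (sk a) (sk a) (sk a)
    -- (G,⊛) is a group with identity ā:
    (∀ x y z : G, mul (mul x y) z = mul x (mul y z)) ∧
    (∀ x : G, mul x (sk a) = x ∧ mul (sk a) x = x) ∧
    (∀ x : G, mul (m (sk a) (sk x) (sk a)) x = sk a ∧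
              mul x (m (sk a) (sk x) (sk a)) = sk a) ∧
    -- φ is an automorphism fixing a:
    (∀ x y : G, φ (mul x y) = mul (φ x) (φ y)) ∧
    Function.Bijective φ ∧ φ a = a ∧
    -- the Gluskin–Hosszú formula:
    (∀ x y z : G, m x y z = mul (mul (mul x (φ y)) (φ (φ z))) b) := by
  intro mul φ b
  have hA : Associative m := hassoc
  have hS : Solvable m := hsolve
  refine ⟨?_, ?_, ?_, ?_, ⟨hS.mid_injective (sk a) a, hS.exists_mid (sk a) a⟩, ?_, ?_⟩ <;>
    simp only [mul, φ, b, hA.left_eq_right, hA.mid_eq_right, m_self_skew_right hA hS hsk,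
      m_self_skew_left hA hS hsk, m_skew_self_left hA hS hsk, m_skew_self_right hA hS hsk,
      m_self_skew_nested hA hS hsk, implies_true, and_self]

/-- Gluskin–Hosszú: For a ternary group (G,[ ]) and fixed a,
x⊛y = [xay] makes G a group with identity ā, φ(x) = [ā x a] is an automorphism
of (G,⊛) fixing a, and [xyz] = x ⊛ φ(y) ⊛ φ²(z) ⊛ b with b = [ā ā ā]. -/
theorem stmt_10 {G : Type*} (m : G → G → G → G)
    (hassoc : ∀ x y z u v : G,
      m (m x y z) u v = m x (m y z u) v ∧ m x (m y z u) v = m x y (m z u v))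
    (hsolve : ∀ a b c : G,
      (∃! x, m x a b = c) ∧ (∃! y, m a y b = c) ∧ (∃! z, m a b z = c))
    (sk : G → G) (hsk : ∀ x : G, m x x (sk x) = x)
    (hsk_uniq : ∀ x z : G, m x x z = x → z = sk x)
    (a : G) :
    let mul : G → G → G := fun x y => m x a y
    let φ : G → G := fun x => m (sk a) x a
    let b : G := m (sk a) (sk a) (sk a)
    -- (G,⊛) is a group with identity ā:
    (∀ x y z : G, mul (mul x y) z = mul x (mul y z)) ∧
    (∀ x : G, mul x (sk a) = x ∧ mul (sk a) x = x) ∧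
    (∀ x : G, mul (m (sk a) (sk x) (sk a)) x = sk a ∧
              mul x (m (sk a) (sk x) (sk a)) = sk a) ∧
    -- φ is an automorphism fixing a:
    (∀ x y : G, φ (mul x y) = mul (φ x) (φ y)) ∧
    Function.Bijective φ ∧ φ a = a ∧
    -- the Gluskin–Hosszú formula:
    (∀ x y z : G, m x y z = mul (mul (mul x (φ y)) (φ (φ z))) b) :=
  stmt_10_general m hassoc hsolve sk hsk a
end

section
/- Any medial ternary group is semicommutative (i.e. [xyz] = [zyx] for all x,y,z), and conversely any semicommutative ternary group is medial. -/
/-!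
Fix `x`. Solvability gives `e`, `f`, `w` with `[x x e] = x = [f x x]` and `[x w x] = y`, and
associativity makes `[t x e] = t = [f x t]` for every `t`. Writing `x`, `y`, `z` as
`[f x x]`, `[x w x]`, `[z x e]`, mediality transposes this `3 × 3` array and swaps `x` with `z`.

Conversely, associativity lets the nine-letter word be rebracketed freely, and three
applications of `[a b c] = [c b a]` to suitable factors carry the rows into the columns.
-/

section TernarySemigroup

variable {G : Type*}

def IsMedial (m : G → G → G → G) : Prop :=
  ∀ x11 x12 x13 x21 x22 x23 x31 x32 x33 : G,
    m (m x11 x12 x13) (m x21 x22 x23) (m x31 x32 x33) =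
      m (m x11 x21 x31) (m x12 x22 x32) (m x13 x23 x33)

def IsSemicommutative (m : G → G → G → G) : Prop :=
  ∀ x y z : G, m x y z = m z y x

variable {m : G → G → G → G}

theorem IsSemicommutative.isMedial
    (h₁ : ∀ x y z u v : G, m (m x y z) u v = m x (m y z u) v)
    (h₂ : ∀ x y z u v : G, m x (m y z u) v = m x y (m z u v))
    (hs : IsSemicommutative m) : IsMedial m := by
  intro x11 x12 x13 x21 x22 x23 x31 x32 x33
  calc m (m x11 x12 x13) (m x21 x22 x23) (m x31 x32 x33)
      = m x11 (m (m (m x12 x13 x21) x22 x23) x31 x32) x33 := by simp only [h₁, h₂]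
    _ = m x11 (m (m (m x21 x13 x12) x22 x23) x31 x32) x33 := by rw [hs x12 x13 x21]
    _ = m (m x11 x21 (m x13 (m x12 x22 x23) x31)) x32 x33 := by simp only [h₁, h₂]
    _ = m (m x11 x21 (m x31 (m x12 x22 x23) x13)) x32 x33 := by
        rw [hs x13 (m x12 x22 x23) x31]
    _ = m x11 (m x21 x31 (m x12 x22 (m x23 x13 x32))) x33 := by simp only [h₁, h₂]
    _ = m x11 (m x21 x31 (m x12 x22 (m x32 x13 x23))) x33 := by rw [hs x23 x13 x32]
    _ = m (m x11 x21 x31) (m x12 x22 x32) (m x13 x23 x33) := by simp only [h₁, h₂]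

theorem IsMedial.isSemicommutative
    (h₁ : ∀ x y z u v : G, m (m x y z) u v = m x (m y z u) v)
    (h₂ : ∀ x y z u v : G, m x (m y z u) v = m x y (m z u v))
    (hleft : ∀ a b c : G, ∃ x, m x a b = c) (hmid : ∀ a b c : G, ∃ y, m a y b = c)
    (hright : ∀ a b c : G, ∃ z, m a b z = c) (hmed : IsMedial m) : IsSemicommutative m := by
  intro x y z
  obtain ⟨e, he⟩ := hright x x x
  obtain ⟨f, hf⟩ := hleft x x x
  obtain ⟨w, hw⟩ := hmid x x y
  have right_neutral (t : G) : m t x e = t := by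
    obtain ⟨u, rfl⟩ := hleft x x t
    rw [h₁, h₂, he]
  have left_neutral (t : G) : m f x t = t := by
    obtain ⟨u, rfl⟩ := hright x x t
    rw [← h₂, ← h₁, hf]
  calc m x y z = m (m f x x) (m x w x) (m z x e) := by rw [left_neutral, right_neutral, hw]
    _ = m (m f x z) (m x w x) (m x x e) := hmed f x x x w x z x e
    _ = m z y x := by rw [left_neutral, he, hw]

end TernarySemigroup

/-- A ternary group is medial iff it is semicommutative. -/
theorem stmt_11 {G : Type*} (m : G → G → G → G)
    (hassoc : ∀ x y z u v : G,
      m (m x y z) u v = m x (m y z u) v ∧ m x (m y z u) v = m x y (m z u v))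
    (hsolve : ∀ a b c : G,
      (∃! x, m x a b = c) ∧ (∃! y, m a y b = c) ∧ (∃! z, m a b z = c)) :
    (∀ x11 x12 x13 x21 x22 x23 x31 x32 x33 : G,
      m (m x11 x12 x13) (m x21 x22 x23) (m x31 x32 x33) =
      m (m x11 x21 x31) (m x12 x22 x32) (m x13 x23 x33)) ↔
    (∀ x y z : G, m x y z = m z y x) := by
  have h₁ x y z u v := (hassoc x y z u v).1
  have h₂ x y z u v := (hassoc x y z u v).2
  exact ⟨IsMedial.isSemicommutative h₁ h₂ (fun a b c => (hsolve a b c).1.exists)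
      (fun a b c => (hsolve a b c).2.1.exists) (fun a b c => (hsolve a b c).2.2.exists),
    IsSemicommutative.isMedial h₁ h₂⟩
end

section
/- A ternary group is semicommutative if and only if there exists a ∈ G such that [xay] = [yax] for all x,y ∈ G. -/
/-
If `[x a y] = [y a x]` for one `a`, write the middle argument as `y = [a u a]`, which middle
solvability allows. Associativity then moves the copies of `a` around, so that `[x y z]` can be
rewritten into `[z y x]` using only the commutation through `a`.
-/

section TernarySemigroup

variable {G : Type*} (m : G → G → G → G)
  (hassoc : ∀ x y z u v : G,
    m (m x y z) u v = m x (m y z u) v ∧ m x (m y z u) v = m x y (m z u v))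

include hassoc in
theorem ternary_assoc_outer (x y z u v : G) : m (m x y z) u v = m x y (m z u v) :=
  (hassoc x y z u v).1.trans (hassoc x y z u v).2

include hassoc in
theorem ternary_semicomm_of_comm_through {a : G} (hmid : ∀ y, ∃ u, m a u a = y)
    (ha : ∀ x y, m x a y = m y a x) (x y z : G) : m x y z = m z y x := by
  obtain ⟨u, rfl⟩ := hmid y
  have houter := ternary_assoc_outer m hassoc
  calc m x (m a u a) z = m (m x a u) a z := ((hassoc x a u a z).1).symm
    _ = m z a (m x a u) := ha _ _
    _ = m (m z a x) a u := (houter z a x a u).symm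
    _ = m (m x a z) a u := by rw [ha z x]
    _ = m x a (m z a u) := houter x a z a u
    _ = m (m z a u) a x := ha _ _
    _ = m z (m a u a) x := (hassoc z a u a x).1

end TernarySemigroup

/-- A ternary group is semicommutative iff there exists a ∈ G
such that [xay] = [yax] for all x,y. -/
theorem stmt_12 {G : Type*} [Nonempty G] (m : G → G → G → G)
    (hassoc : ∀ x y z u v : G,
      m (m x y z) u v = m x (m y z u) v ∧ m x (m y z u) v = m x y (m z u v))
    (hsolve : ∀ a b c : G,
      (∃! x, m x a b = c) ∧ (∃! y, m a y b = c) ∧ (∃! z, m a b z = c)) :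
    (∀ x y z : G, m x y z = m z y x) ↔ (∃ a : G, ∀ x y : G, m x a y = m y a x) := by
  constructor
  · intro hsemicomm
    obtain ⟨a⟩ := ‹Nonempty G›
    exact ⟨a, fun x y => hsemicomm x a y⟩
  · rintro ⟨a, ha⟩
    exact ternary_semicomm_of_comm_through m hassoc (fun y => (hsolve a a y).2.1.exists) ha
end

section
/- (Post coverage theorem) For any ternary group (G,[ ]) and fixed c ∈ G, the set G* = G × Z₂ with operation (x,0)⊛(y,0) = ([x y c̄],1), (x,0)⊛(y,1) = ([xyc],0), (x,1)⊛(y,0) = ([xcy],0), (x,1)⊛(y,1) = ([xcy],1) is a binary group with identity (c̄,1), the set H = {(x,1) : x ∈ G} is a normal subgroup with G*/H ≅ Z₂, and identifying x with (x,0), one has (x,0)⊛(y,0)⊛(z,0) = ([xyz],0) for all x,y,z ∈ G. -/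
/-!
The skew element `c̄` of `c` makes the pairs `(c, c̄)` and `(c̄, c)` act trivially inside a ternary
product: `[x c c̄] = [c̄ c x] = [x c̄ c] = x` (Dörnte's identities). With them, both sides of every
instance of associativity of `⊛` reduce to the same right-nested ternary word. Right inverses
come from solvability in `G`, and in an associative unital operation they are two-sided.
-/

structure IsTernaryGroup {G : Type*} (m : G → G → G → G) : Prop where
  assoc : ∀ x y z u v : G,
    m (m x y z) u v = m x (m y z u) v ∧ m x (m y z u) v = m x y (m z u v)
  solve : ∀ a b c : G,
    (∃! x, m x a b = c) ∧ (∃! y, m a y b = c) ∧ (∃! z, m a b z = c)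

namespace IsTernaryGroup

variable {G : Type*} {m : G → G → G → G} (hG : IsTernaryGroup m)
include hG

theorem assoc_left (x y z u v : G) : m (m x y z) u v = m x (m y z u) v :=
  (hG.assoc x y z u v).1

theorem assoc_mid (x y z u v : G) : m x (m y z u) v = m x y (m z u v) :=
  (hG.assoc x y z u v).2

theorem assoc_outer (x y z u v : G) : m (m x y z) u v = m x y (m z u v) :=
  (hG.assoc_left x y z u v).trans (hG.assoc_mid x y z u v)

theorem cancel_mid {a b y y' : G} (h : m a y b = m a y' b) : y = y' :=
  (hG.solve a b (m a y' b)).2.1.unique h rfl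

theorem cancel_right {a b z z' : G} (h : m a b z = m a b z') : z = z' :=
  (hG.solve a b (m a b z')).2.2.unique h rfl

variable {c e : G} (he : m c c e = c)
include he

theorem self_skew_right (x : G) : m x c e = x := by
  obtain ⟨u, rfl⟩ := (hG.solve c c x).1.exists
  rw [hG.assoc_outer, he]

theorem skew_self_left (x : G) : m e c x = x := by
  have hecc : m e c c = c := hG.cancel_right (a := c) (b := c) <| by rw [← hG.assoc_outer, he]
  obtain ⟨v, rfl⟩ := (hG.solve c c x).2.2.exists
  rw [← hG.assoc_outer, hecc]

theorem skew_self_right (x : G) : m x e c = x := by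
  have hcec : m c e c = c := hG.cancel_mid (a := c) (b := c) <| by rw [← hG.assoc_left, he]
  obtain ⟨u, rfl⟩ := (hG.solve c c x).1.exists
  rw [hG.assoc_outer, hcec]

end IsTernaryGroup

theorem exists_inv_of_exists_right_inv {α : Type*} (op : α → α → α) (one : α)
    (assoc : ∀ g h k, op (op g h) k = op g (op h k))
    (op_one : ∀ g, op g one = g) (one_op : ∀ g, op one g = g)
    (right_inv : ∀ g, ∃ h, op g h = one) (g : α) :
    ∃ h, op g h = one ∧ op h g = one := by
  obtain ⟨h, hgh⟩ := right_inv g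
  obtain ⟨k, hhk⟩ := right_inv h
  refine ⟨h, hgh, ?_⟩
  calc op h g = op (op h g) (op h k) := by rw [hhk, op_one]
    _ = op h (op (op g h) k) := by simp only [assoc]
    _ = one := by rw [hgh, one_op, hhk]

theorem ZMod.eq_zero_or_eq_one (a : ZMod 2) : a = 0 ∨ a = 1 := by revert a; decide

-- `e` plays the role of the skew element `c̄`.
structure IsPostCoverOp {G : Type*} (m : G → G → G → G) (c e : G)
    (op : G × ZMod 2 → G × ZMod 2 → G × ZMod 2) : Prop where
  zero_zero : ∀ x y : G, op (x, 0) (y, 0) = (m x y e, 1)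
  zero_one : ∀ x y : G, op (x, 0) (y, 1) = (m x y c, 0)
  one_zero : ∀ x y : G, op (x, 1) (y, 0) = (m x c y, 0)
  one_one : ∀ x y : G, op (x, 1) (y, 1) = (m x c y, 1)

namespace IsPostCoverOp

variable {G : Type*} {m : G → G → G → G} {c e : G} {op : G × ZMod 2 → G × ZMod 2 → G × ZMod 2}
  (hop : IsPostCoverOp m c e op)
include hop

theorem parity_add (g h : G × ZMod 2) : (op g h).2 + 1 = (g.2 + 1) + (h.2 + 1) := by
  obtain ⟨x, ε⟩ := g
  obtain ⟨y, δ⟩ := h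
  rcases ZMod.eq_zero_or_eq_one ε with rfl | rfl <;>
    rcases ZMod.eq_zero_or_eq_one δ with rfl | rfl <;>
    simp only [hop.zero_zero, hop.zero_one, hop.one_zero, hop.one_one] <;> decide

variable (hG : IsTernaryGroup m) (he : m c c e = c)
include hG he

theorem assoc (g h k : G × ZMod 2) : op (op g h) k = op g (op h k) := by
  obtain ⟨x, ε⟩ := g
  obtain ⟨y, δ⟩ := h
  obtain ⟨z, γ⟩ := k
  rcases ZMod.eq_zero_or_eq_one ε with rfl | rfl <;>
    rcases ZMod.eq_zero_or_eq_one δ with rfl | rfl <;>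
    rcases ZMod.eq_zero_or_eq_one γ with rfl | rfl <;>
    simp only [hop.zero_zero, hop.zero_one, hop.one_zero, hop.one_one, hG.assoc_outer,
      hG.assoc_mid, hG.self_skew_right he, hG.skew_self_left he, hG.skew_self_right he]

theorem op_skew_one (g : G × ZMod 2) : op g (e, 1) = g := by
  obtain ⟨x, ε⟩ := g
  rcases ZMod.eq_zero_or_eq_one ε with rfl | rfl
  · rw [hop.zero_one, hG.skew_self_right he]
  · rw [hop.one_one, hG.self_skew_right he]

theorem skew_one_op (g : G × ZMod 2) : op (e, 1) g = g := by
  obtain ⟨x, ε⟩ := g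
  rcases ZMod.eq_zero_or_eq_one ε with rfl | rfl
  · rw [hop.one_zero, hG.skew_self_left he]
  · rw [hop.one_one, hG.skew_self_left he]

theorem exists_inv (g : G × ZMod 2) : ∃ h, op g h = (e, 1) ∧ op h g = (e, 1) := by
  refine exists_inv_of_exists_right_inv op (e, 1) (hop.assoc hG he)
    (hop.op_skew_one hG he) (hop.skew_one_op hG he) (fun g ↦ ?_) g
  obtain ⟨x, ε⟩ := g
  rcases ZMod.eq_zero_or_eq_one ε with rfl | rfl
  · obtain ⟨y, hy⟩ := (hG.solve x e e).2.1.exists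
    exact ⟨(y, 0), by rw [hop.zero_zero, hy]⟩
  · obtain ⟨y, hy⟩ := (hG.solve x c e).2.2.exists
    exact ⟨(y, 1), by rw [hop.one_one, hy]⟩

theorem op_op_zero (x y z : G) : op (op (x, 0) (y, 0)) (z, 0) = (m x y z, 0) := by
  rw [hop.zero_zero, hop.one_zero, hG.assoc_outer, hG.skew_self_left he]

end IsPostCoverOp

theorem stmt_13_general {G : Type*} (m : G → G → G → G)
    (hassoc : ∀ x y z u v : G,
      m (m x y z) u v = m x (m y z u) v ∧ m x (m y z u) v = m x y (m z u v))
    (hsolve : ∀ a b c : G,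
      (∃! x, m x a b = c) ∧ (∃! y, m a y b = c) ∧ (∃! z, m a b z = c))
    (sk : G → G) (hsk : ∀ x : G, m x x (sk x) = x)
    (c : G)
    (op : G × ZMod 2 → G × ZMod 2 → G × ZMod 2)
    (h00 : ∀ x y : G, op (x, 0) (y, 0) = (m x y (sk c), 1))
    (h01 : ∀ x y : G, op (x, 0) (y, 1) = (m x y c, 0))
    (h10 : ∀ x y : G, op (x, 1) (y, 0) = (m x c y, 0))
    (h11 : ∀ x y : G, op (x, 1) (y, 1) = (m x c y, 1)) :
    -- (G*,⊛) is a group with identity (c̄,1):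
    (∀ g h k : G × ZMod 2, op (op g h) k = op g (op h k)) ∧
    (∀ g : G × ZMod 2, op g (sk c, 1) = g ∧ op (sk c, 1) g = g) ∧
    (∀ g : G × ZMod 2, ∃ h, op g h = (sk c, 1) ∧ op h g = (sk c, 1)) ∧
    -- the parity map g ↦ g.2 + 1 is a surjective homomorphism onto Z₂
    -- whose kernel is H = {(x,1) : x ∈ G}, so H ⊴ G* and G*/H ≅ Z₂:
    (∀ g h : G × ZMod 2, (op g h).2 + 1 = (g.2 + 1) + (h.2 + 1)) ∧
    Function.Surjective (fun g : G × ZMod 2 => g.2 + 1) ∧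
    (∀ g : G × ZMod 2, g.2 + 1 = (0 : ZMod 2) ↔ g.2 = 1) ∧
    -- identifying x with (x,0):
    (∀ x y z : G, op (op (x, 0) (y, 0)) (z, 0) = (m x y z, 0)) := by
  have hG : IsTernaryGroup m := ⟨hassoc, hsolve⟩
  have hop : IsPostCoverOp m c (sk c) op := ⟨h00, h01, h10, h11⟩
  refine ⟨hop.assoc hG (hsk c), fun g ↦ ⟨hop.op_skew_one hG (hsk c) g, hop.skew_one_op hG (hsk c) g⟩,
    hop.exists_inv hG (hsk c), hop.parity_add,
    fun b ↦ ⟨(c, b + 1), by simp [add_assoc, CharTwo.add_self_eq_zero]⟩,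
    fun g ↦ by rw [add_eq_zero_iff_eq_neg, ZMod.neg_eq_self_mod_two],
    hop.op_op_zero hG (hsk c)⟩

/-- Post coverage theorem: G* = G × Z₂ with the indicated
operation is a group with identity (c̄,1); H = {(x,1)} is a normal subgroup
with G*/H ≅ Z₂ (expressed via a surjective homomorphism G* → Z₂ with
kernel H); and (x,0)⊛(y,0)⊛(z,0) = ([xyz],0). -/
theorem stmt_13 {G : Type*} (m : G → G → G → G)
    (hassoc : ∀ x y z u v : G,
      m (m x y z) u v = m x (m y z u) v ∧ m x (m y z u) v = m x y (m z u v))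
    (hsolve : ∀ a b c : G,
      (∃! x, m x a b = c) ∧ (∃! y, m a y b = c) ∧ (∃! z, m a b z = c))
    (sk : G → G) (hsk : ∀ x : G, m x x (sk x) = x)
    (hsk_uniq : ∀ x z : G, m x x z = x → z = sk x)
    (c : G)
    (op : G × ZMod 2 → G × ZMod 2 → G × ZMod 2)
    (h00 : ∀ x y : G, op (x, 0) (y, 0) = (m x y (sk c), 1))
    (h01 : ∀ x y : G, op (x, 0) (y, 1) = (m x y c, 0))
    (h10 : ∀ x y : G, op (x, 1) (y, 0) = (m x c y, 0))
    (h11 : ∀ x y : G, op (x, 1) (y, 1) = (m x c y, 1)) :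
    -- (G*,⊛) is a group with identity (c̄,1):
    (∀ g h k : G × ZMod 2, op (op g h) k = op g (op h k)) ∧
    (∀ g : G × ZMod 2, op g (sk c, 1) = g ∧ op (sk c, 1) g = g) ∧
    (∀ g : G × ZMod 2, ∃ h, op g h = (sk c, 1) ∧ op h g = (sk c, 1)) ∧
    -- the parity map g ↦ g.2 + 1 is a surjective homomorphism onto Z₂
    -- whose kernel is H = {(x,1) : x ∈ G}, so H ⊴ G* and G*/H ≅ Z₂:
    (∀ g h : G × ZMod 2, (op g h).2 + 1 = (g.2 + 1) + (h.2 + 1)) ∧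
    Function.Surjective (fun g : G × ZMod 2 => g.2 + 1) ∧
    (∀ g : G × ZMod 2, g.2 + 1 = (0 : ZMod 2) ↔ g.2 = 1) ∧
    -- identifying x with (x,0):
    (∀ x y z : G, op (op (x, 0) (y, 0)) (z, 0) = (m x y z, 0)) :=
  stmt_13_general m hassoc hsolve sk hsk c op h00 h01 h10 h11
end

section
/- For a ternary group (G,[ ]), the operation (x,y)∗(u,v) = ([xyu], v) on G × G is associative, every element (x, x̄) is a left identity, and (G×G, ∗) is left cancellative and a right quasigroup (for all (a,b),(c,d) there is a unique (x,y) with (a,b)∗(x,y) = (c,d)). -/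
open Function

namespace TernaryGroup

variable {G : Type*} (m : G → G → G → G)

def pairOp (p q : G × G) : G × G := (m p.1 p.2 q.1, q.2)

variable {m}

lemma pairOp_assoc (hassoc : ∀ x y z u v, m (m x y z) u v = m x y (m z u v))
    (p q r : G × G) : pairOp m (pairOp m p q) r = pairOp m p (pairOp m q r) :=
  Prod.ext (hassoc _ _ _ _ _) rfl

/-- Both `[x [x z a] a]` and `[x a a]` equal `[[x x z] a a]`, so cancel the middle argument. -/
lemma mid_eq_of_skew (hassoc : ∀ x y z u v, m (m x y z) u v = m x (m y z u) v)
    (hmid : ∀ a b, Injective (fun y => m a y b)) {x z : G} (hz : m x x z = x) (a : G) :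
    m x z a = a :=
  hmid x a <| show m x (m x z a) a = m x a a by rw [← hassoc, hz]

lemma pairOp_skew_left (hassoc : ∀ x y z u v, m (m x y z) u v = m x (m y z u) v)
    (hmid : ∀ a b, Injective (fun y => m a y b)) {x z : G} (hz : m x x z = x) (p : G × G) :
    pairOp m (x, z) p = p :=
  Prod.ext (mid_eq_of_skew hassoc hmid hz p.1) rfl

lemma pairOp_left_bijective (hright : ∀ a b, Bijective (m a b)) (a : G × G) :
    Bijective (pairOp m a) :=
  -- `pairOp m a` is `Prod.map (m a.1 a.2) id` by definition.
  (hright a.1 a.2).prodMap bijective_id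

end TernaryGroup

open TernaryGroup

theorem stmt_14_general {G : Type*} (m : G → G → G → G)
    (hassoc : ∀ x y z u v : G,
      m (m x y z) u v = m x (m y z u) v ∧ m x (m y z u) v = m x y (m z u v))
    (hsolve : ∀ a b c : G,
      (∃! x, m x a b = c) ∧ (∃! y, m a y b = c) ∧ (∃! z, m a b z = c))
    (sk : G → G) (hsk : ∀ x : G, m x x (sk x) = x) :
    let op : G × G → G × G → G × G := fun p q => (m p.1 p.2 q.1, q.2)
    (∀ p q r : G × G, op (op p q) r = op p (op q r)) ∧
    (∀ x : G, ∀ p : G × G, op (x, sk x) p = p) ∧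
    (∀ a p q : G × G, op a p = op a q → p = q) ∧
    (∀ a c : G × G, ∃! p : G × G, op a p = c) := by
  intro op
  have hmid : ∀ a b, Injective (fun y => m a y b) := fun a b =>
    ((bijective_iff_existsUnique _).2 fun c => (hsolve a b c).2.1).injective
  have hright : ∀ a b, Bijective (m a b) := fun a b =>
    (bijective_iff_existsUnique _).2 fun c => (hsolve a b c).2.2
  exact ⟨pairOp_assoc fun x y z u v => (hassoc x y z u v).1.trans (hassoc x y z u v).2,
    fun x => pairOp_skew_left (fun x y z u v => (hassoc x y z u v).1) hmid (hsk x),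
    fun a => (pairOp_left_bijective hright a).injective,
    fun a => (bijective_iff_existsUnique _).1 (pairOp_left_bijective hright a)⟩

/-- For a ternary group (G,[ ]), the operation
(x,y)∗(u,v) = ([xyu],v) on G×G is associative, every (x,x̄) is a left
identity, and (G×G,∗) is left cancellative and a right quasigroup. -/
theorem stmt_14 {G : Type*} (m : G → G → G → G)
    (hassoc : ∀ x y z u v : G,
      m (m x y z) u v = m x (m y z u) v ∧ m x (m y z u) v = m x y (m z u v))
    (hsolve : ∀ a b c : G,
      (∃! x, m x a b = c) ∧ (∃! y, m a y b = c) ∧ (∃! z, m a b z = c))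
    (sk : G → G) (hsk : ∀ x : G, m x x (sk x) = x)
    (hsk_uniq : ∀ x z : G, m x x z = x → z = sk x) :
    let op : G × G → G × G → G × G := fun p q => (m p.1 p.2 q.1, q.2)
    (∀ p q r : G × G, op (op p q) r = op p (op q r)) ∧
    (∀ x : G, ∀ p : G × G, op (x, sk x) p = p) ∧
    (∀ a p q : G × G, op a p = op a q → p = q) ∧
    (∀ a c : G × G, ∃! p : G × G, op a p = c) :=
  stmt_14_general m hassoc hsolve sk hsk
end

section
/- Let Π^L : G × G → End V be a left representation of a ternary group (G,[ ]), i.e. Π^L(x₁,x₂)∘Π^L(x₃,x₄) = Π^L([x₁x₂x₃], x₄) and Π^L(x, x̄) = id_V. Then Π^L([x₁x₂x₃], x₄) = Π^L(x₁, [x₂x₃x₄]) for all x₁,x₂,x₃,x₄ ∈ G. -/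
theorem rep_eq_rep_mul_skew {G M : Type*} [Monoid M] {m : G → G → G → G} {sk : G → G}
    {P : G → G → M} (hrep : ∀ x1 x2 x3 x4 : G, P x1 x2 * P x3 x4 = P (m x1 x2 x3) x4)
    (hunit : ∀ x : G, P x (sk x) = 1) (x y z : G) :
    P x y = P (m x y z) (sk z) := by
  rw [← hrep, hunit, mul_one]

theorem stmt_15_general {G : Type*} (m : G → G → G → G)
    (hassoc : ∀ x y z u v : G,
      m (m x y z) u v = m x (m y z u) v ∧ m x (m y z u) v = m x y (m z u v))
    (sk : G → G)
    {K : Type*} [Field K] {V : Type*} [AddCommGroup V] [Module K V]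
    (P : G → G → Module.End K V)
    (hrep : ∀ x1 x2 x3 x4 : G, P x1 x2 * P x3 x4 = P (m x1 x2 x3) x4)
    (hunit : ∀ x : G, P x (sk x) = 1) :
    ∀ x1 x2 x3 x4 : G, P (m x1 x2 x3) x4 = P x1 (m x2 x3 x4) := by
  intro x1 x2 x3 x4
  rw [rep_eq_rep_mul_skew hrep hunit _ _ x4, rep_eq_rep_mul_skew hrep hunit x1 _ x4,
    (hassoc x1 x2 x3 x4 x4).1]

/-- For a left representation P^L of a ternary group,
P^L([x₁x₂x₃], x₄) = P^L(x₁, [x₂x₃x₄]). -/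
theorem stmt_15 {G : Type*} (m : G → G → G → G)
    (hassoc : ∀ x y z u v : G,
      m (m x y z) u v = m x (m y z u) v ∧ m x (m y z u) v = m x y (m z u v))
    (hsolve : ∀ a b c : G,
      (∃! x, m x a b = c) ∧ (∃! y, m a y b = c) ∧ (∃! z, m a b z = c))
    (sk : G → G) (hsk : ∀ x : G, m x x (sk x) = x)
    (hsk_uniq : ∀ x z : G, m x x z = x → z = sk x)
    {K : Type*} [Field K] {V : Type*} [AddCommGroup V] [Module K V]
    (P : G → G → Module.End K V)
    (hrep : ∀ x1 x2 x3 x4 : G, P x1 x2 * P x3 x4 = P (m x1 x2 x3) x4)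
    (hunit : ∀ x : G, P x (sk x) = 1) :
    ∀ x1 x2 x3 x4 : G, P (m x1 x2 x3) x4 = P x1 (m x2 x3 x4) :=
  stmt_15_general m hassoc sk P hrep hunit
end

section
/- If (G,[ ]) is a medial ternary group, then any left representation has commuting values: Π^L(x₁,x₂) ∘ Π^L(x₃,x₄) = Π^L(x₃,x₄) ∘ Π^L(x₁,x₂) for all x₁,x₂,x₃,x₄ ∈ G. If moreover (G,[ ]) is commutative, then Π^L(x,y) = Π^L(y,x). -/
/-!
Since `Π(z, z̄) = 1`, every value of a left representation can be rewritten with a prescribed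
skew element as second argument: `Π(a, b) = Π(a, b) Π(z, z̄) = Π([a b z], z̄)`. Both products
`Π(x₁, x₂) Π(x₃, x₄)` and `Π(x₃, x₄) Π(x₁, x₂)` thus become `Π(·, x̄₁)`, and associativity together
with mediality identifies the first arguments; likewise commutativity gives `[x y x] = [y x x]`.
-/

section LeftRepresentation

variable {G M : Type*} [Monoid M] {m : G → G → G → G} {sk : G → G} {P : G → G → M}

theorem leftRep_eq_skew (hrep : ∀ x1 x2 x3 x4 : G, P x1 x2 * P x3 x4 = P (m x1 x2 x3) x4)
    (hunit : ∀ x : G, P x (sk x) = 1) (a b z : G) :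
    P a b = P (m a b z) (sk z) := by
  rw [← hrep, hunit, mul_one]

theorem leftRep_mul_comm_of_medial
    (hassoc : ∀ x y z u v : G, m (m x y z) u v = m x y (m z u v))
    (hmedial : ∀ x y z : G, m x y z = m z y x)
    (hrep : ∀ x1 x2 x3 x4 : G, P x1 x2 * P x3 x4 = P (m x1 x2 x3) x4)
    (hunit : ∀ x : G, P x (sk x) = 1) (x1 x2 x3 x4 : G) :
    P x1 x2 * P x3 x4 = P x3 x4 * P x1 x2 := by
  have hfirst : m (m x1 x2 x3) x4 x1 = m (m x3 x4 x1) x2 x1 :=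
    calc m (m x1 x2 x3) x4 x1
        = m x1 x2 (m x3 x4 x1) := hassoc x1 x2 x3 x4 x1
      _ = m (m x3 x4 x1) x2 x1 := hmedial _ _ _
  rw [hrep, hrep, leftRep_eq_skew hrep hunit _ x4 x1, leftRep_eq_skew hrep hunit _ x2 x1, hfirst]

theorem leftRep_comm_of_comm (hcomm : ∀ x y z : G, m x y z = m y x z)
    (hrep : ∀ x1 x2 x3 x4 : G, P x1 x2 * P x3 x4 = P (m x1 x2 x3) x4)
    (hunit : ∀ x : G, P x (sk x) = 1) (x y : G) :
    P x y = P y x := by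
  rw [leftRep_eq_skew hrep hunit x y x, leftRep_eq_skew hrep hunit y x x, hcomm]

end LeftRepresentation

theorem stmt_17_general {G : Type*} (m : G → G → G → G)
    (hassoc : ∀ x y z u v : G,
      m (m x y z) u v = m x (m y z u) v ∧ m x (m y z u) v = m x y (m z u v))
    (sk : G → G)
    {K : Type*} [Field K] {V : Type*} [AddCommGroup V] [Module K V]
    (P : G → G → Module.End K V)
    (hrep : ∀ x1 x2 x3 x4 : G, P x1 x2 * P x3 x4 = P (m x1 x2 x3) x4)
    (hunit : ∀ x : G, P x (sk x) = 1)
    (hmedial : ∀ x y z : G, m x y z = m z y x) :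
    (∀ x1 x2 x3 x4 : G, P x1 x2 * P x3 x4 = P x3 x4 * P x1 x2) ∧
    ((∀ x y z : G, m x y z = m y x z ∧ m x y z = m x z y) →
      ∀ x y : G, P x y = P y x) :=
  ⟨leftRep_mul_comm_of_medial (fun x y z u v => (hassoc x y z u v).1.trans (hassoc x y z u v).2)
      hmedial hrep hunit,
    fun hcomm => leftRep_comm_of_comm (fun x y z => (hcomm x y z).1) hrep hunit⟩

/-- For a medial (= semicommutative) ternary group, any left
representation has commuting values; if moreover the group is commutative,
then P^L(x,y) = P^L(y,x). -/
theorem stmt_17 {G : Type*} (m : G → G → G → G)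
    (hassoc : ∀ x y z u v : G,
      m (m x y z) u v = m x (m y z u) v ∧ m x (m y z u) v = m x y (m z u v))
    (hsolve : ∀ a b c : G,
      (∃! x, m x a b = c) ∧ (∃! y, m a y b = c) ∧ (∃! z, m a b z = c))
    (sk : G → G) (hsk : ∀ x : G, m x x (sk x) = x)
    (hsk_uniq : ∀ x z : G, m x x z = x → z = sk x)
    {K : Type*} [Field K] {V : Type*} [AddCommGroup V] [Module K V]
    (P : G → G → Module.End K V)
    (hrep : ∀ x1 x2 x3 x4 : G, P x1 x2 * P x3 x4 = P (m x1 x2 x3) x4)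
    (hunit : ∀ x : G, P x (sk x) = 1)
    (hmedial : ∀ x y z : G, m x y z = m z y x) :
    (∀ x1 x2 x3 x4 : G, P x1 x2 * P x3 x4 = P x3 x4 * P x1 x2) ∧
    ((∀ x y z : G, m x y z = m y x z ∧ m x y z = m x z y) →
      ∀ x y : G, P x y = P y x) :=
  stmt_17_general m hassoc sk P hrep hunit hmedial
end

section
/- Let (G,[ ]) = der(G,⊙) be a ternary group derived from a binary group (G,⊙) with identity e (so [xyz] = x⊙y⊙z). Then π ↦ Π^L with Π^L(x,y) = π(x)∘π(y) and Π^L ↦ π with π(x) = Π^L(x,e) give a one-to-one correspondence between representations of the binary group (G,⊙) on V and left representations of (G,[ ]) on V. -/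
/-!
In the derived ternary group `[xyz] = x * y * z` with skew element `x⁻¹`, a left representation
`P` is determined by `x ↦ P x 1`: composing with `P 1 1 = P 1 1⁻¹ = 1` on the right gives
`P x y = P (x * y) 1`, and the composition law with `x₂ = x₄ = 1` then splits `P x y` as
`P x 1 * P y 1` and makes `x ↦ P x 1` multiplicative.
-/

namespace DerivedTernaryGroup

variable {G M : Type*} [Group G] [Monoid M]

def IsLeftRep (P : G → G → M) : Prop :=
  (∀ x₁ x₂ x₃ x₄ : G, P x₁ x₂ * P x₃ x₄ = P (x₁ * x₂ * x₃) x₄) ∧ ∀ x : G, P x x⁻¹ = 1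

theorem isLeftRep_mul_of_monoidHom (π : G →* M) : IsLeftRep fun x y => π x * π y :=
  ⟨fun _ _ _ _ => by simp only [map_mul, mul_assoc],
   fun x => map_mul_eq_one π (mul_inv_cancel x)⟩

namespace IsLeftRep

variable {P : G → G → M}

theorem map_one_one (hP : IsLeftRep P) : P 1 1 = 1 := by
  simpa using hP.2 1

theorem eq_map_mul_one (hP : IsLeftRep P) (x y : G) : P x y = P (x * y) 1 :=
  calc P x y = P x y * P 1 1 := by rw [hP.map_one_one, mul_one]
    _ = P (x * y) 1 := by rw [hP.1, mul_one]

theorem eq_mul (hP : IsLeftRep P) (x y : G) : P x y = P x 1 * P y 1 := by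
  rw [hP.1, mul_one, hP.eq_map_mul_one]

theorem map_mul_one (hP : IsLeftRep P) (x y : G) : P (x * y) 1 = P x 1 * P y 1 := by
  rw [← hP.eq_map_mul_one, hP.eq_mul]

end IsLeftRep

end DerivedTernaryGroup

open DerivedTernaryGroup in
/-- For the ternary group derived from a binary group G
([xyz] = x*y*z, skew = inverse), the assignments π ↦ P^L, P^L(x,y) = π(x)∘π(y),
and P^L ↦ π, π(x) = P^L(x,e), form a one-to-one correspondence between
representations of (G,⊙) and left representations of der(G,⊙). -/
theorem stmt_18 {G : Type*} [Group G]
    {K : Type*} [Field K] {V : Type*} [AddCommGroup V] [Module K V] :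
    let m : G → G → G → G := fun x y z => x * y * z
    let IsLeftRep : (G → G → Module.End K V) → Prop := fun P =>
      (∀ x1 x2 x3 x4 : G, P x1 x2 * P x3 x4 = P (m x1 x2 x3) x4) ∧
      (∀ x : G, P x x⁻¹ = 1)
    -- every binary representation yields a left representation:
    (∀ π : Representation K G V, IsLeftRep (fun x y => π x * π y)) ∧
    -- every left representation yields a binary representation π(x) = P(x,e):
    (∀ P : G → G → Module.End K V, IsLeftRep P →
      ((∀ x y : G, P (x * y) 1 = P x 1 * P y 1) ∧ P 1 1 = 1 ∧
      -- and the correspondence is one-to-one: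
       (∀ x y : G, P x y = P x 1 * P y 1))) :=
  ⟨fun π => isLeftRep_mul_of_monoidHom π,
   fun _ hP => ⟨IsLeftRep.map_mul_one hP, IsLeftRep.map_one_one hP, IsLeftRep.eq_mul hP⟩⟩
end

section
/- Every left representation of a commutative ternary group (G,[ ]) is a middle representation, i.e. it satisfies Π(x₃,y₃)∘Π(x₂,y₂)∘Π(x₁,y₁) = Π([x₃x₂x₁], [y₁y₂y₃]) and Π(x,y)∘Π(x̄,ȳ) = Π(x̄,ȳ)∘Π(x,y) = id_V. -/
/-!
Multiplying `P a b` on the right by `P e (sk e) = 1` gives `P a b = P (m a b e) (sk e)`, so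
`P a b` depends only on the product `m a b e`. With commutativity and associativity of `m` this
makes `P` symmetric, gives `P (m a b c) d = P a (m b c d)`, `P a b * P c d = P a c * P b d`, and
makes the values of `P` commute pairwise. The middle-representation identities are then
rearrangements in the monoid.
-/

structure IsLeftRepresentation {G M : Type*} [Monoid M] (m : G → G → G → G) (sk : G → G)
    (P : G → G → M) : Prop where
  mul_eq : ∀ a b c d : G, P a b * P c d = P (m a b c) d
  apply_skew : ∀ x : G, P x (sk x) = 1

namespace IsLeftRepresentation

variable {G M : Type*} [Monoid M] {m : G → G → G → G} {sk : G → G} {P : G → G → M}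

theorem eq_apply_op_skew (hP : IsLeftRepresentation m sk P) (a b e : G) :
    P a b = P (m a b e) (sk e) := by
  rw [← hP.mul_eq, hP.apply_skew, mul_one]

theorem symm (hP : IsLeftRepresentation m sk P) (hcomm₁₂ : ∀ x y z : G, m x y z = m y x z)
    (a b : G) : P a b = P b a := by
  rw [hP.eq_apply_op_skew a b a, hP.eq_apply_op_skew b a a, hcomm₁₂]

theorem apply_op_left (hP : IsLeftRepresentation m sk P)
    (hassoc : ∀ a b c d e : G, m (m a b c) d e = m a (m b c d) e) (a b c d : G) :
    P (m a b c) d = P a (m b c d) := by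
  rw [hP.eq_apply_op_skew _ d a, hP.eq_apply_op_skew a _ a, hassoc]

theorem mul_mul_swap (hP : IsLeftRepresentation m sk P)
    (hcomm₂₃ : ∀ x y z : G, m x y z = m x z y) (a b c d : G) :
    P a b * P c d = P a c * P b d := by
  rw [hP.mul_eq, hP.mul_eq, hcomm₂₃]

theorem commute (hP : IsLeftRepresentation m sk P) (hcomm₁₂ : ∀ x y z : G, m x y z = m y x z)
    (hassoc : ∀ a b c d e : G, m (m a b c) d e = m a (m b c d) e) (a b c d : G) :
    Commute (P a b) (P c d) := by
  have hsymm := hP.symm hcomm₁₂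
  have hshift := hP.apply_op_left hassoc
  calc P a b * P c d = P (m a b c) d := hP.mul_eq a b c d
    _ = P (m d a b) c := by rw [hsymm, ← hshift]
    _ = P (m c d a) b := by rw [hsymm, ← hshift]
    _ = P c d * P a b := (hP.mul_eq c d a b).symm

theorem mul_mul_eq (hP : IsLeftRepresentation m sk P)
    (hcomm₁₂ : ∀ x y z : G, m x y z = m y x z) (hcomm₂₃ : ∀ x y z : G, m x y z = m x z y)
    (hassoc : ∀ a b c d e : G, m (m a b c) d e = m a (m b c d) e) (x₁ x₂ x₃ y₁ y₂ y₃ : G) :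
    P x₃ y₃ * P x₂ y₂ * P x₁ y₁ = P (m x₃ x₂ x₁) (m y₁ y₂ y₃) := by
  calc P x₃ y₃ * P x₂ y₂ * P x₁ y₁ = P x₃ x₂ * (P y₃ y₂ * P x₁ y₁) := by
        rw [hP.mul_mul_swap hcomm₂₃, mul_assoc]
    _ = P x₃ x₂ * P x₁ y₁ * P y₂ y₃ := by
        rw [(hP.commute hcomm₁₂ hassoc y₃ y₂ x₁ y₁).eq, hP.symm hcomm₁₂ y₃, mul_assoc]
    _ = P (m x₃ x₂ x₁) (m y₁ y₂ y₃) := by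
        rw [hP.mul_eq, hP.mul_eq, hP.apply_op_left hassoc]

theorem mul_apply_skew_skew (hP : IsLeftRepresentation m sk P)
    (hcomm₂₃ : ∀ x y z : G, m x y z = m x z y) (x y : G) : P x y * P (sk x) (sk y) = 1 := by
  rw [hP.mul_mul_swap hcomm₂₃, hP.apply_skew, hP.apply_skew, one_mul]

theorem apply_skew_skew_mul (hP : IsLeftRepresentation m sk P)
    (hcomm₁₂ : ∀ x y z : G, m x y z = m y x z) (hcomm₂₃ : ∀ x y z : G, m x y z = m x z y)
    (x y : G) : P (sk x) (sk y) * P x y = 1 := by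
  rw [hP.mul_mul_swap hcomm₂₃, hP.symm hcomm₁₂ (sk x), hP.symm hcomm₁₂ (sk y), hP.apply_skew,
    hP.apply_skew, one_mul]

end IsLeftRepresentation

theorem stmt_19_general {G : Type*} (m : G → G → G → G)
    (hassoc : ∀ x y z u v : G,
      m (m x y z) u v = m x (m y z u) v ∧ m x (m y z u) v = m x y (m z u v))
    (sk : G → G)
    (hcomm : ∀ x y z : G, m x y z = m y x z ∧ m x y z = m x z y)
    {K : Type*} [Field K] {V : Type*} [AddCommGroup V] [Module K V]
    (P : G → G → Module.End K V)
    (hrep : ∀ x1 x2 x3 x4 : G, P x1 x2 * P x3 x4 = P (m x1 x2 x3) x4)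
    (hunit : ∀ x : G, P x (sk x) = 1) :
    (∀ x1 x2 x3 y1 y2 y3 : G,
      P x3 y3 * P x2 y2 * P x1 y1 = P (m x3 x2 x1) (m y1 y2 y3)) ∧
    (∀ x y : G, P x y * P (sk x) (sk y) = 1 ∧ P (sk x) (sk y) * P x y = 1) := by
  have hP : IsLeftRepresentation m sk P := ⟨hrep, hunit⟩
  have hcomm₁₂ x y z := (hcomm x y z).1
  have hcomm₂₃ x y z := (hcomm x y z).2
  exact ⟨hP.mul_mul_eq hcomm₁₂ hcomm₂₃ fun x y z u v => (hassoc x y z u v).1,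
    fun x y => ⟨hP.mul_apply_skew_skew hcomm₂₃ x y, hP.apply_skew_skew_mul hcomm₁₂ hcomm₂₃ x y⟩⟩

/-- Every left representation of a commutative ternary group is
a middle representation. -/
theorem stmt_19 {G : Type*} (m : G → G → G → G)
    (hassoc : ∀ x y z u v : G,
      m (m x y z) u v = m x (m y z u) v ∧ m x (m y z u) v = m x y (m z u v))
    (hsolve : ∀ a b c : G,
      (∃! x, m x a b = c) ∧ (∃! y, m a y b = c) ∧ (∃! z, m a b z = c))
    (sk : G → G) (hsk : ∀ x : G, m x x (sk x) = x)
    (hsk_uniq : ∀ x z : G, m x x z = x → z = sk x)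
    (hcomm : ∀ x y z : G, m x y z = m y x z ∧ m x y z = m x z y)
    {K : Type*} [Field K] {V : Type*} [AddCommGroup V] [Module K V]
    (P : G → G → Module.End K V)
    (hrep : ∀ x1 x2 x3 x4 : G, P x1 x2 * P x3 x4 = P (m x1 x2 x3) x4)
    (hunit : ∀ x : G, P x (sk x) = 1) :
    (∀ x1 x2 x3 y1 y2 y3 : G,
      P x3 y3 * P x2 y2 * P x1 y1 = P (m x3 x2 x1) (m y1 y2 y3)) ∧
    (∀ x y : G, P x y * P (sk x) (sk y) = 1 ∧ P (sk x) (sk y) * P x y = 1) :=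
  stmt_19_general m hassoc sk hcomm P hrep hunit
end
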